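/- Let X be a locally compact Hausdorff space and (Y,d) a non-compact metric space with at least two points. If MU(X,Y) with the topology of uniform convergence on compact sets is locally σ-compact, then X is compact. -/

import Mathlib

open TopologicalSpace Metric Set

noncomputable section

/-- `F` is usco: upper semicontinuous with nonempty compact values. -/
def IsUsco {X Y : Type*} [TopologicalSpace X] [TopologicalSpace Y] (F : X → Set Y) : Prop :=
  (∀ x, (F x).Nonempty) ∧ (∀ x, IsCompact (F x)) ∧
    ∀ x, ∀ V : Set Y, IsOpen V → F x ⊆ V →
      ∃ U : Set X, IsOpen U ∧ x ∈ U ∧ ∀ x' ∈ U, F x' ⊆ V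

/-- `F` is minimal usco: minimal w.r.t. inclusion (of graphs) among usco maps. -/
def IsMinimalUsco {X Y : Type*} [TopologicalSpace X] [TopologicalSpace Y] (F : X → Set Y) : Prop :=
  IsUsco F ∧ ∀ G : X → Set Y, IsUsco G → (∀ x, G x ⊆ F x) → G = F

/-- The space `MU(X,Y)` of minimal usco maps from `X` to `Y`, as a subspace of the space of all
maps `X → K(Y)` with the uniformity of uniform convergence on compact sets, where the hyperspace
`K(Y)` of nonempty compact subsets of `Y` carries the Hausdorff metric. -/
def MU (X Y : Type*) [TopologicalSpace X] [MetricSpace Y] : Type _ :=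
  {F : UniformOnFun X (NonemptyCompacts Y) {K : Set X | IsCompact K} //
    IsMinimalUsco (fun x => ((UniformOnFun.toFun {K : Set X | IsCompact K} F) x : Set Y))}

instance (X Y : Type*) [TopologicalSpace X] [MetricSpace Y] : UniformSpace (MU X Y) :=
  inferInstanceAs (UniformSpace
    {F : UniformOnFun X (NonemptyCompacts Y) {K : Set X | IsCompact K} //
      IsMinimalUsco (fun x => ((UniformOnFun.toFun {K : Set X | IsCompact K} F) x : Set Y))})

instance (X Y : Type*) [TopologicalSpace X] [MetricSpace Y] : TopologicalSpace (MU X Y) :=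
  (inferInstance : UniformSpace (MU X Y)).toTopologicalSpace

/-- The underlying multifunction of a minimal usco map. -/
def MU.toFun {X Y : Type*} [TopologicalSpace X] [MetricSpace Y] (F : MU X Y) : X → Set Y :=
  fun x => ((UniformOnFun.toFun {K : Set X | IsCompact K} F.val) x : Set Y)

/-- The value of a minimal usco map at a point, as a nonempty compact subset of `Y`. -/
def MU.val' {X Y : Type*} [TopologicalSpace X] [MetricSpace Y] (F : MU X Y) (x : X) :
    NonemptyCompacts Y :=
  UniformOnFun.toFun {K : Set X | IsCompact K} F.val x

/-- `D₂(X,Y)`: the minimal usco maps whose total image has at most two points. -/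
def D2 (X Y : Type*) [TopologicalSpace X] [MetricSpace Y] : Set (MU X Y) :=
  {F | (⋃ x, F.toFun x).encard ≤ 2}

/-- A space is locally σ-compact if every point has a σ-compact neighborhood. -/
def LocallySigmaCompact (Z : Type*) [TopologicalSpace Z] : Prop :=
  ∀ z : Z, ∃ s ∈ nhds z, IsSigmaCompact s

end

noncomputable section AuxProof

open Filter

/-- The singleton element of `NonemptyCompacts`. -/
def ncSing {Y : Type*} [MetricSpace Y] (y : Y) : NonemptyCompacts Y :=
  ⟨⟨{y}, isCompact_singleton⟩, Set.singleton_nonempty y⟩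

set_option linter.unusedSectionVars false

variable {X Y : Type*} [TopologicalSpace X] [MetricSpace Y]

def mkMU (g : X → NonemptyCompacts Y)
    (hg : IsMinimalUsco (fun x => (g x : Set Y))) : MU X Y :=
  ⟨UniformOnFun.ofFun {K : Set X | IsCompact K} g, hg⟩

lemma mkMU_val' (g : X → NonemptyCompacts Y) (hg) (x : X) : (mkMU g hg).val' x = g x := rfl

lemma isMinimalUsco_singleton {Z W : Type*} [TopologicalSpace Z] [TopologicalSpace W]
    (s : Z → W) (h : ∀ x, ∃ U, IsOpen U ∧ x ∈ U ∧ ∀ x' ∈ U, s x' = s x) :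
    IsMinimalUsco (fun x => ({s x} : Set W)) := by
  constructor
  · refine ⟨fun x => ⟨s x, rfl⟩, fun x => isCompact_singleton, ?_⟩
    intro x V hV hxV
    obtain ⟨U, hU, hxU, hloc⟩ := h x
    exact ⟨U, hU, hxU, fun x' hx' => by show ({s x'} : Set W) ⊆ V; rw [hloc x' hx']; exact hxV⟩
  · intro G hG hsub
    funext x
    exact (Set.Nonempty.subset_singleton_iff (hG.1 x)).mp (hsub x)

open scoped Classical in
/-- Two-valued map attached to a set `U`. -/
def twoVal (U : Set X) (a b : Y) : X → Set Y := fun x =>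
  if x ∈ U then {a} else if x ∈ closure U then {a, b} else {b}

lemma twoVal_subset (U : Set X) (a b : Y) (x : X) : twoVal U a b x ⊆ {a, b} := by
  unfold twoVal
  split_ifs with h1 h2
  · exact Set.singleton_subset_iff.mpr (Set.mem_insert a {b})
  · exact Set.Subset.rfl
  · exact Set.singleton_subset_iff.mpr (Set.mem_insert_of_mem a rfl)

lemma twoVal_nonempty (U : Set X) (a b : Y) (x : X) : (twoVal U a b x).Nonempty := by
  unfold twoVal; split_ifs <;> simp

lemma twoVal_compact (U : Set X) (a b : Y) (x : X) : IsCompact (twoVal U a b x) := by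
  unfold twoVal; split_ifs
  · exact isCompact_singleton
  · exact (Set.finite_singleton b).insert a |>.isCompact
  · exact isCompact_singleton

lemma twoVal_of_mem {U : Set X} {a b : Y} {x : X} (hx : x ∈ U) : twoVal U a b x = {a} := by
  unfold twoVal; rw [if_pos hx]

lemma twoVal_of_not_mem_closure {U : Set X} {a b : Y} {x : X} (hx : x ∉ closure U) :
    twoVal U a b x = {b} := by
  unfold twoVal
  rw [if_neg (fun h => hx (subset_closure h)), if_neg hx]

lemma isMinimalUsco_twoVal {U : Set X} (hro : interior (closure U) = U) {a b : Y}
    (hab : a ≠ b) : IsMinimalUsco (twoVal U a b) := by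
  have hUo : IsOpen U := hro ▸ isOpen_interior
  constructor
  · refine ⟨twoVal_nonempty U a b, twoVal_compact U a b, ?_⟩
    intro x V hV hxV
    by_cases h1 : x ∈ U
    · refine ⟨U, hUo, h1, fun x' hx' => ?_⟩
      rw [twoVal_of_mem hx']
      rw [twoVal_of_mem h1] at hxV
      exact hxV
    by_cases h2 : x ∈ closure U
    · refine ⟨Set.univ, isOpen_univ, trivial, fun x' _ => ?_⟩
      refine (twoVal_subset U a b x').trans ?_
      have : twoVal U a b x = {a, b} := by unfold twoVal; rw [if_neg h1, if_pos h2]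
      rw [this] at hxV; exact hxV
    · refine ⟨(closure U)ᶜ, isClosed_closure.isOpen_compl, h2, fun x' hx' => ?_⟩
      rw [twoVal_of_not_mem_closure hx']
      rw [twoVal_of_not_mem_closure h2] at hxV
      exact hxV
  · intro G hG hsub
    funext x
    by_cases h1 : x ∈ U
    · rw [twoVal_of_mem h1]
      refine (Set.Nonempty.subset_singleton_iff (hG.1 x)).mp ?_
      have := hsub x; rwa [twoVal_of_mem (a := a) (b := b) h1] at this
    by_cases h2 : x ∈ closure U
    case neg =>
      rw [twoVal_of_not_mem_closure h2]
      refine (Set.Nonempty.subset_singleton_iff (hG.1 x)).mp ?_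
      have := hsub x; rwa [twoVal_of_not_mem_closure (a := a) (b := b) h2] at this
    -- boundary case
    have hval : twoVal U a b x = {a, b} := by unfold twoVal; rw [if_neg h1, if_pos h2]
    have hsubx : G x ⊆ {a, b} := hval ▸ hsub x
    have ha : a ∈ G x := by
      by_contra hna
      have hGx : G x ⊆ ({a} : Set Y)ᶜ := fun y hy h' => hna (h' ▸ hy)
      obtain ⟨U', hU'o, hxU', hU'⟩ := hG.2.2 x ({a} : Set Y)ᶜ isClosed_singleton.isOpen_compl hGx
      obtain ⟨x', hx'⟩ := (mem_closure_iff.mp h2) U' hU'o hxU'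
      have h1' : G x' ⊆ {a} := by
        have := hsub x'; rwa [twoVal_of_mem (a := a) (b := b) hx'.2] at this
      obtain ⟨y, hy⟩ := hG.1 x'
      have : y = a := h1' hy
      exact (hU' x' hx'.1 hy) (by rw [this]; rfl)
    have hb : b ∈ G x := by
      by_contra hnb
      have hGx : G x ⊆ ({b} : Set Y)ᶜ := fun y hy h' => hnb (h' ▸ hy)
      obtain ⟨U', hU'o, hxU', hU'⟩ := hG.2.2 x ({b} : Set Y)ᶜ isClosed_singleton.isOpen_compl hGx
      have : ¬ U' ⊆ closure U := by
        intro hsubcl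
        exact h1 (hro ▸ (interior_maximal hsubcl hU'o) hxU')
      obtain ⟨x', hx'U', hx'cl⟩ := Set.not_subset.mp this
      have h1' : G x' ⊆ {b} := by
        have := hsub x'; rwa [twoVal_of_not_mem_closure (a := a) (b := b) hx'cl] at this
      obtain ⟨y, hy⟩ := hG.1 x'
      have : y = b := h1' hy
      exact (hU' x' hx'U' hy) (by rw [this]; rfl)
    rw [hval]
    refine Set.Subset.antisymm hsubx ?_
    intro y hy
    rcases hy with h | h
    · rwa [h]
    · rw [Set.mem_singleton_iff.mp h]; exact hb

lemma regOpen_interior_closure {Z : Type*} [TopologicalSpace Z] {s : Set Z} (hs : IsOpen s) :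
    interior (closure (interior (closure s))) = interior (closure s) := by
  have h1 : closure (interior (closure s)) = closure s := by
    refine Set.Subset.antisymm ?_ ?_
    · nth_rewrite 2 [← closure_closure (s := s)]
      exact closure_mono interior_subset
    · exact closure_mono (interior_maximal subset_closure hs)
  rw [h1]

lemma exists_disjoint_opens {Z : Type*} [TopologicalSpace Z] [T2Space Z]
    {M : Set Z} (hM : IsOpen M) (hMinf : M.Infinite) :
    ∃ W : ℕ → Set Z, (∀ n, IsOpen (W n)) ∧ (∀ n, (W n).Nonempty) ∧ (∀ n, W n ⊆ M) ∧
      ∀ m n, m ≠ n → Disjoint (W m) (W n) := by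
  have step : ∀ O : {O : Set Z // IsOpen O ∧ O.Infinite},
      ∃ p : Set Z × {O : Set Z // IsOpen O ∧ O.Infinite},
        IsOpen p.1 ∧ p.1.Nonempty ∧ p.1 ⊆ O.1 ∧ p.2.1 ⊆ O.1 ∧ Disjoint p.1 p.2.1 := by
    rintro ⟨O, hO, hOinf⟩
    obtain ⟨x, hx, y, hy, hxy⟩ := hOinf.nontrivial
    obtain ⟨u, v, hu, hv, hxu, hyv, huv⟩ := t2_separation hxy
    by_cases hcase : (v ∩ O).Infinite
    · exact ⟨⟨u ∩ O, ⟨v ∩ O, hv.inter hO, hcase⟩⟩, hu.inter hO, ⟨x, hxu, hx⟩,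
        Set.inter_subset_right, Set.inter_subset_right,
        (huv.mono Set.inter_subset_left Set.inter_subset_left)⟩
    · have hfin : (v ∩ O).Finite := Set.not_infinite.mp hcase
      have hfin' : ((v ∩ O) \ {y}).Finite := hfin.diff
      refine ⟨⟨(v ∩ O) \ ((v ∩ O) \ {y}), ⟨O \ (v ∩ O), hO.sdiff hfin.isClosed,
        hOinf.diff hfin⟩⟩, (hv.inter hO).sdiff hfin'.isClosed, ⟨y, ⟨⟨hyv, hy⟩, ?_⟩⟩,
        (Set.diff_subset).trans Set.inter_subset_right, Set.diff_subset, ?_⟩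
      · simp
      · refine Set.disjoint_left.mpr ?_
        rintro z ⟨hz1, _⟩ ⟨_, hz3⟩
        exact hz3 hz1
  choose f hf1 hf2 hf3 hf4 hf5 using step
  let g : ℕ → Set Z × {O : Set Z // IsOpen O ∧ O.Infinite} :=
    fun n => Nat.rec (f ⟨M, hM, hMinf⟩) (fun _ p => f p.2) n
  have hg : ∀ n, g (n + 1) = f (g n).2 := fun n => rfl
  have hOmono : ∀ n, (g (n + 1)).2.1 ⊆ (g n).2.1 := fun n => by rw [hg n]; exact hf4 _
  have hWsub : ∀ n, (g (n + 1)).1 ⊆ (g n).2.1 := fun n => by rw [hg n]; exact hf3 _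
  have hOchain : ∀ m n, m ≤ n → (g n).2.1 ⊆ (g m).2.1 := by
    intro m n hmn
    induction hmn with
    | refl => exact Set.Subset.rfl
    | @step k hk ih => exact (hOmono k).trans ih
  have hWopen : ∀ n, IsOpen (g n).1 := by
    intro n; cases n with
    | zero => exact hf1 _
    | succ k => rw [hg k]; exact hf1 _
  have hWne : ∀ n, ((g n).1).Nonempty := by
    intro n; cases n with
    | zero => exact hf2 _
    | succ k => rw [hg k]; exact hf2 _
  have hWdisj : ∀ n, Disjoint (g n).1 (g n).2.1 := by
    intro n; cases n with
    | zero => exact hf5 _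
    | succ k => rw [hg k]; exact hf5 _
  have hsubM : ∀ n, (g n).1 ⊆ M ∧ (g n).2.1 ⊆ M := by
    intro n; induction n with
    | zero => exact ⟨hf3 _, hf4 _⟩
    | succ k ih => exact ⟨(hWsub k).trans ih.2, (hOmono k).trans ih.2⟩
  have key : ∀ m n, m < n → Disjoint (g m).1 (g n).1 := by
    intro m n hmn
    obtain ⟨k, rfl⟩ := Nat.exists_eq_add_of_lt hmn
    have h1 : (g (m + k + 1)).1 ⊆ (g m).2.1 := (hWsub (m + k)).trans (hOchain m (m + k) (Nat.le_add_right m k))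
    exact (hWdisj m).mono_right h1
  refine ⟨fun n => (g n).1, hWopen, hWne, fun n => (hsubM n).1, ?_⟩
  intro m n hmn
  rcases Nat.lt_or_ge m n with h | h
  · exact key m n h
  · exact (key n m (lt_of_le_of_ne h (Ne.symm hmn))).symm

lemma compacts_nonempty : ({K : Set X | IsCompact K}).Nonempty := ⟨∅, isCompact_empty⟩

lemma compacts_directed : DirectedOn (· ⊆ ·) {K : Set X | IsCompact K} :=
  fun K1 h1 K2 h2 => ⟨K1 ∪ K2, h1.union h2, Set.subset_union_left, Set.subset_union_right⟩

lemma mu_nhds (F : MU X Y) {S : Set (MU X Y)} (hS : S ∈ nhds F) :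
    ∃ (K : Set X) (ε : ℝ), IsCompact K ∧ 0 < ε ∧
      ∀ G : MU X Y, (∀ x ∈ K, dist (F.val' x) (G.val' x) < ε) → G ∈ S := by
  obtain ⟨V, hV, hVS⟩ := UniformSpace.mem_nhds_iff.mp hS
  rw [show (uniformity (MU X Y)) = Filter.comap
      (fun q : MU X Y × MU X Y => (q.1.val, q.2.val))
      (uniformity (UniformOnFun X (NonemptyCompacts Y) {K : Set X | IsCompact K}))
    from uniformity_subtype] at hV
  obtain ⟨E, hE, hEV⟩ := Filter.mem_comap.mp hV
  obtain ⟨⟨K, ε⟩, ⟨hK, hε⟩, hgen⟩ :=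
    ((UniformOnFun.hasBasis_uniformity_of_basis X (NonemptyCompacts Y)
      {K : Set X | IsCompact K} compacts_nonempty compacts_directed
      Metric.uniformity_basis_dist).mem_iff).mp hE
  refine ⟨K, ε, hK, hε, fun G hG => hVS ?_⟩
  exact hEV (hgen (fun x hx => hG x hx))

lemma mu_entourage {C : Set X} (hC : IsCompact C) {δ : ℝ} (hδ : 0 < δ) :
    {p : MU X Y × MU X Y | ∀ x ∈ C, dist (p.1.val' x) (p.2.val' x) < δ} ∈ uniformity (MU X Y) := by
  rw [show (uniformity (MU X Y)) = Filter.comap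
      (fun q : MU X Y × MU X Y => (q.1.val, q.2.val))
      (uniformity (UniformOnFun X (NonemptyCompacts Y) {K : Set X | IsCompact K}))
    from uniformity_subtype]
  refine Filter.mem_comap.mpr ⟨UniformOnFun.gen {K : Set X | IsCompact K} C
    {p : NonemptyCompacts Y × NonemptyCompacts Y | dist p.1 p.2 < δ}, ?_, ?_⟩
  · exact (UniformOnFun.hasBasis_uniformity_of_basis X (NonemptyCompacts Y)
      {K : Set X | IsCompact K} compacts_nonempty compacts_directed
      Metric.uniformity_basis_dist).mem_of_mem (i := (C, δ)) ⟨hC, hδ⟩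
  · intro p hp
    exact hp

lemma mu_continuous_eval (x : X) : Continuous fun F : MU X Y => F.val' x := by
  have h2 := UniformOnFun.uniformContinuous_eval_of_mem (NonemptyCompacts Y)
    {K : Set X | IsCompact K} (Set.mem_singleton x) (isCompact_singleton : IsCompact {x})
  exact (h2.comp uniformContinuous_subtype_val).continuous

lemma compactSpace_of_all_singletons {V : Set (NonemptyCompacts Y)} (hV : IsCompact V)
    (hall : ∀ y : Y, ncSing y ∈ V) : CompactSpace Y := by
  rw [← isCompact_univ_iff]
  refine IsSeqCompact.isCompact ?_
  intro y _
  obtain ⟨C, hCV, φ, hφ, hconv⟩ := hV.isSeqCompact (x := fun n => ncSing (y n))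
    (fun n => hall (y n))
  obtain ⟨ylim, hylim⟩ := C.nonempty
  refine ⟨ylim, Set.mem_univ _, φ, hφ, ?_⟩
  have hd : Filter.Tendsto (fun n => dist (ncSing (y (φ n))) C) Filter.atTop (nhds 0) := by
    simpa using hconv.dist (tendsto_const_nhds (x := C))
  have hle : ∀ n, dist (y (φ n)) ylim ≤ dist (ncSing (y (φ n))) C := by
    intro n
    have hfin : EMetric.hausdorffEdist (↑C : Set Y) ({y (φ n)} : Set Y) ≠ ⊤ :=
      Metric.hausdorffEdist_ne_top_of_nonempty_of_bounded C.nonempty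
        (Set.singleton_nonempty _) C.isCompact.isBounded Bornology.isBounded_singleton
    have h1 : Metric.infDist ylim ({y (φ n)} : Set Y) ≤
        Metric.hausdorffDist (↑C : Set Y) ({y (φ n)} : Set Y) :=
      Metric.infDist_le_hausdorffDist_of_mem hylim hfin
    rw [Metric.infDist_singleton] at h1
    rw [dist_comm]
    calc dist ylim (y (φ n)) ≤ Metric.hausdorffDist (↑C : Set Y) ({y (φ n)} : Set Y) := h1
      _ = dist (ncSing (y (φ n))) C := by
          rw [Metric.NonemptyCompacts.dist_eq, Metric.hausdorffDist_comm]; rfl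
  rw [tendsto_iff_dist_tendsto_zero]
  exact squeeze_zero (fun n => dist_nonneg) hle hd

end AuxProof

/-- If `Y` is non-compact and `MU(X,Y)` is locally σ-compact, then `X` is compact. -/
theorem statement10 {X Y : Type*} [TopologicalSpace X] [T2Space X] [LocallyCompactSpace X]
    [MetricSpace Y] [Nontrivial Y] (hY : ¬CompactSpace Y)
    (h : LocallySigmaCompact (MU X Y)) :
    CompactSpace X := by
  classical
  by_contra hX
  obtain ⟨a, b, hab⟩ := exists_pair_ne Y
  have hFmin : IsMinimalUsco (fun _ : X => ({b} : Set Y)) :=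
    isMinimalUsco_singleton (fun _ : X => b)
      (fun x => ⟨Set.univ, isOpen_univ, trivial, fun _ _ => rfl⟩)
  set F : MU X Y := mkMU (fun _ => ncSing b) hFmin with hFdef
  obtain ⟨S, hSnhds, hSsig⟩ := h F
  obtain ⟨K, ε, hK, hε, hball⟩ := mu_nhds F hSnhds
  obtain ⟨CC, hCC, hCCU⟩ := hSsig
  by_cases hiso : ∀ p, p ∉ K → ({p} : Set X) ∈ nhds p
  · -- Case (ii): every point outside K is isolated; diagonalize.
    obtain ⟨K', hK', hKK'⟩ := exists_compact_superset hK
    set R := (interior K')ᶜ with hR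
    have hRclosed : IsClosed R := isOpen_interior.isClosed_compl
    have hRK : R ⊆ Kᶜ := fun x hx hxK => hx (hKK' hxK)
    by_cases hRinf : R.Infinite
    · set e := Set.Infinite.natEmbedding R hRinf with he
      set d : ℕ → X := fun n => (e n : X) with hd
      have hdR : ∀ n, d n ∈ R := fun n => (e n).2
      have hdinj : Function.Injective d := fun m n hmn => e.injective (Subtype.ext hmn)
      set D := Set.range d with hD
      have hDR : D ⊆ R := by rintro x ⟨n, rfl⟩; exact hdR n
      have hDK : ∀ x ∈ D, x ∉ K := fun x hx => hRK (hDR hx)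
      have hDclosed : IsClosed D := by
        refine isClosed_of_closure_subset ?_
        intro q hq
        have hqR : q ∈ R := closure_minimal hDR hRclosed hq
        have h1 : ({q} : Set X) ∈ nhds q := hiso q (hRK hqR)
        obtain ⟨x, hx1, hx2⟩ := mem_closure_iff_nhds.mp hq {q} h1
        rwa [Set.mem_singleton_iff.mp hx1] at hx2
      set Vn : ℕ → Set (NonemptyCompacts Y) :=
        fun n => (fun G : MU X Y => G.val' (d n)) '' (CC n) with hVn
      have hVncomp : ∀ n, IsCompact (Vn n) := fun n => (hCC n).image (mu_continuous_eval (d n))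
      have hzex : ∀ n, ∃ z : Y, ncSing z ∉ Vn n := by
        intro n
        by_contra h'
        push_neg at h'
        exact hY (compactSpace_of_all_singletons (hVncomp n) h')
      choose z hz using hzex
      set f : X → Y := fun x => if hc : ∃ n, d n = x then z hc.choose else b with hf
      have hfd : ∀ n, f (d n) = z n := by
        intro n
        have hex : ∃ m, d m = d n := ⟨n, rfl⟩
        show (if hc : ∃ m, d m = d n then z hc.choose else b) = z n
        rw [dif_pos hex]
        exact congrArg z (hdinj hex.choose_spec)
      have hfnot : ∀ x, x ∉ D → f x = b := by
        intro x hx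
        show (if hc : ∃ m, d m = x then z hc.choose else b) = b
        rw [dif_neg]
        rintro ⟨n, rfl⟩
        exact hx ⟨n, rfl⟩
      have hloc : ∀ x, ∃ U, IsOpen U ∧ x ∈ U ∧ ∀ x' ∈ U, f x' = f x := by
        intro x
        by_cases hx : x ∈ D
        · have h1 : ({x} : Set X) ∈ nhds x := hiso x (hDK x hx)
          obtain ⟨U, hUsub, hUopen, hxU⟩ := mem_nhds_iff.mp h1
          have hUeq : U = {x} :=
            Set.Subset.antisymm hUsub (Set.singleton_subset_iff.mpr hxU)
          exact ⟨{x}, hUeq ▸ hUopen, rfl, fun x' hx' => by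
            rw [Set.mem_singleton_iff.mp hx']⟩
        · exact ⟨Dᶜ, hDclosed.isOpen_compl, hx, fun x' hx' => by
            rw [hfnot x' hx', hfnot x hx]⟩
      set G : MU X Y := mkMU (fun x => ncSing (f x)) (isMinimalUsco_singleton f hloc) with hG
      have hGS : G ∈ S := by
        refine hball G ?_
        intro x hx
        have hxD : x ∉ D := fun hxD => hDK x hxD hx
        have hval : G.val' x = ncSing b := by
          show ncSing (f x) = ncSing b
          rw [hfnot x hxD]
        have hvalF : F.val' x = ncSing b := rfl
        rw [hval, hvalF, dist_self]
        exact hε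
      have hGU : G ∈ ⋃ n, CC n := by rw [hCCU]; exact hGS
      obtain ⟨n, hn⟩ := Set.mem_iUnion.mp hGU
      have hmemV : G.val' (d n) ∈ Vn n := ⟨G, hn, rfl⟩
      have hvaldn : G.val' (d n) = ncSing (z n) := by
        show ncSing (f (d n)) = _
        rw [hfd n]
      rw [hvaldn] at hmemV
      exact hz n hmemV
    · -- R finite: X is compact, contradiction.
      rw [Set.not_infinite] at hRinf
      refine hX ⟨?_⟩
      have huniv : (Set.univ : Set X) = K' ∪ R := by
        ext x
        simp only [Set.mem_univ, true_iff, Set.mem_union, hR, Set.mem_compl_iff]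
        by_cases hx : x ∈ interior K'
        · exact Or.inl (interior_subset hx)
        · exact Or.inr hx
      rw [huniv]
      exact hK'.union hRinf.isCompact
  · -- Case (i): some non-isolated point outside K.
    push_neg at hiso
    obtain ⟨p, hpK, hpiso⟩ := hiso
    have hmem : Kᶜ ∈ nhds p := hK.isClosed.isOpen_compl.mem_nhds hpK
    obtain ⟨C, hCnhds, hCsub, hCcomp⟩ := LocallyCompactSpace.local_compact_nhds p Kᶜ hmem
    set M := interior C with hM
    have hpM : p ∈ M := mem_interior_iff_mem_nhds.mpr hCnhds
    have hMinf : M.Infinite := by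
      by_contra hfin
      rw [Set.not_infinite] at hfin
      have h1 : IsClosed (M \ {p}) := ((hfin.diff : (M \ {p}).Finite).isClosed)
      have h2 : IsOpen (M \ (M \ {p})) := isOpen_interior.sdiff h1
      have h3 : M \ (M \ {p}) = {p} := by
        rw [Set.diff_diff_right_self]
        exact Set.inter_eq_self_of_subset_right (Set.singleton_subset_iff.mpr hpM)
      exact hpiso ((h3 ▸ h2).mem_nhds rfl)
    obtain ⟨W, hWopen, hWne, hWM, hWdisj⟩ := exists_disjoint_opens isOpen_interior hMinf
    choose w hw using hWne
    have hwC : ∀ n, w n ∈ C := fun n => interior_subset (hWM n (hw n))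
    set UA : Set ℕ → Set X := fun A => interior (closure (⋃ n ∈ A, W n)) with hUA
    have hUAro : ∀ A, interior (closure (UA A)) = UA A :=
      fun A => regOpen_interior_closure (isOpen_biUnion fun n _ => hWopen n)
    have hUAcl : ∀ A, closure (UA A) ⊆ C := by
      intro A
      have h1 : closure (UA A) ⊆ closure (⋃ n ∈ A, W n) := by
        refine (closure_mono interior_subset).trans ?_
        rw [closure_closure]
      refine h1.trans ?_
      have h2 : (⋃ n ∈ A, W n) ⊆ C :=
        Set.iUnion₂_subset fun n _ => (hWM n).trans interior_subset
      calc closure (⋃ n ∈ A, W n) ⊆ closure C := closure_mono h2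
        _ = C := hCcomp.isClosed.closure_eq
    have hwUA : ∀ (A : Set ℕ) n, n ∈ A → w n ∈ UA A := by
      intro A n hn
      exact interior_maximal ((Set.subset_biUnion_of_mem hn).trans subset_closure)
        (hWopen n) (hw n)
    have hwnot : ∀ (A : Set ℕ) n, n ∉ A → w n ∉ closure (UA A) := by
      intro A n hn hmem'
      have h1 : closure (UA A) ⊆ closure (⋃ m ∈ A, W m) := by
        refine (closure_mono interior_subset).trans ?_
        rw [closure_closure]
      obtain ⟨x, hx⟩ := mem_closure_iff.mp (h1 hmem') (W n) (hWopen n) (hw n)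
      obtain ⟨m, hm, hxm⟩ := Set.mem_iUnion₂.mp hx.2
      exact (hWdisj n m (fun hnm => hn (hnm ▸ hm))).le_bot ⟨hx.1, hxm⟩
    set γ : Set ℕ → MU X Y := fun A =>
      mkMU (fun x => ⟨⟨twoVal (UA A) a b x, twoVal_compact _ _ _ _⟩, twoVal_nonempty _ _ _ _⟩)
        (isMinimalUsco_twoVal (hUAro A) hab) with hγ
    have hγS : ∀ A, γ A ∈ S := by
      intro A
      refine hball (γ A) ?_
      intro x hx
      have hxn : x ∉ closure (UA A) := fun hc => hCsub (hUAcl A hc) hx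
      have hveq : (γ A).val' x = ncSing b := by
        refine NonemptyCompacts.ext ?_
        show twoVal (UA A) a b x = {b}
        exact twoVal_of_not_mem_closure hxn
      have hvalF : F.val' x = ncSing b := rfl
      rw [hveq, hvalF, dist_self]
      exact hε
    have hfinA : ∀ n : ℕ, {A : Set ℕ | γ A ∈ CC n}.Finite := by
      intro n
      set δ := dist a b / 2 with hδdef
      have hδ : 0 < δ := by
        have := dist_pos.mpr hab
        positivity
      have hE : {q : MU X Y × MU X Y | ∀ x ∈ C, dist (q.1.val' x) (q.2.val' x) < δ}
          ∈ uniformity (MU X Y) := mu_entourage hCcomp hδ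
      obtain ⟨t, htmem, htcov⟩ := (hCC n).elim_nhds_subcover
        (fun G => {H : MU X Y | ∀ x ∈ C, dist (G.val' x) (H.val' x) < δ})
        (fun G _ => UniformSpace.ball_mem_nhds G hE)
      have hne : Nonempty (MU X Y) := ⟨F⟩
      have hchoice : ∀ A : Set ℕ, γ A ∈ CC n →
          ∃ G, G ∈ t ∧ ∀ x ∈ C, dist (G.val' x) ((γ A).val' x) < δ := by
        intro A hA
        have h2 := htcov hA
        simpa using h2
      choose! χ hχt hχmem using hchoice
      refine Set.Finite.of_finite_image (f := χ) ?_ ?_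
      · refine t.finite_toSet.subset ?_
        rintro G ⟨A, hA, rfl⟩
        exact hχt A hA
      · intro A hA B hB hAB
        by_contra hne
        have hIff : ¬ ∀ n₀, (n₀ ∈ A ↔ n₀ ∈ B) := fun h' => hne (Set.ext h')
        push_neg at hIff
        obtain ⟨n₀, hn₀⟩ := hIff
        have key : ∀ (P Q : Set ℕ), P ∈ {A : Set ℕ | γ A ∈ CC n} →
            Q ∈ {A : Set ℕ | γ A ∈ CC n} → χ P = χ Q → n₀ ∈ P → n₀ ∉ Q → False := by
          intro P Q hP hQ hPQ hnP hnQ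
          have d1 := hχmem P hP (w n₀) (hwC n₀)
          have d2 := hχmem Q hQ (w n₀) (hwC n₀)
          rw [hPQ] at d1
          have htri : dist ((γ P).val' (w n₀)) ((γ Q).val' (w n₀)) < dist a b := by
            calc dist ((γ P).val' (w n₀)) ((γ Q).val' (w n₀))
                ≤ dist ((γ P).val' (w n₀)) ((χ Q).val' (w n₀)) +
                  dist ((χ Q).val' (w n₀)) ((γ Q).val' (w n₀)) := dist_triangle _ _ _
              _ < δ + δ := by
                  refine add_lt_add ?_ d2
                  rw [dist_comm]
                  exact d1
              _ = dist a b := by rw [hδdef]; ring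
          have hlow : dist a b ≤ dist ((γ P).val' (w n₀)) ((γ Q).val' (w n₀)) := by
            have hcoeP : ((γ P).val' (w n₀) : Set Y) = {a} := twoVal_of_mem (hwUA P n₀ hnP)
            have hcoeQ : ((γ Q).val' (w n₀) : Set Y) = {b} :=
              twoVal_of_not_mem_closure (hwnot Q n₀ hnQ)
            rw [Metric.NonemptyCompacts.dist_eq, hcoeP, hcoeQ]
            have hfin : EMetric.hausdorffEdist ({a} : Set Y) ({b} : Set Y) ≠ ⊤ :=
              Metric.hausdorffEdist_ne_top_of_nonempty_of_bounded (Set.singleton_nonempty _)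
                (Set.singleton_nonempty _) Bornology.isBounded_singleton
                Bornology.isBounded_singleton
            have h1 := Metric.infDist_le_hausdorffDist_of_mem
              (Set.mem_singleton a) hfin
            rwa [Metric.infDist_singleton] at h1
          exact absurd htri (not_lt.mpr hlow)
        rcases hn₀ with ⟨hA0, hB0⟩ | ⟨hA0, hB0⟩
        · exact key A B hA hB hAB hA0 hB0
        · exact key B A hB hA hAB.symm hB0 hA0
    have huniv : (Set.univ : Set (Set ℕ)) ⊆ ⋃ n, {A : Set ℕ | γ A ∈ CC n} := by
      intro A _
      have hmem' : γ A ∈ ⋃ n, CC n := by rw [hCCU]; exact hγS A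
      obtain ⟨n, hn⟩ := Set.mem_iUnion.mp hmem'
      exact Set.mem_iUnion.mpr ⟨n, hn⟩
    have hcnt : (Set.univ : Set (Set ℕ)).Countable :=
      Set.Countable.mono huniv (Set.countable_iUnion (fun n => (hfinA n).countable))
    have : Countable (Set ℕ) := Set.countable_univ_iff.mp hcnt
    obtain ⟨g, hg⟩ := exists_injective_nat (Set ℕ)
    exact Function.cantor_injective g hg
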